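/- Let n ≥ 1, let C ∈ Mₙ(ℂ) satisfy Cᵀ = −C and rank C = s (with s ≤ n), and let x = fromBlocks 0 0 C 0 ∈ M_{2n}(ℂ). Let E ⊆ M_{2n}(ℂ) be the subspace of matrices fromBlocks A 0 0 (−Aᵀ) with A ∈ Mₙ(ℂ) (the even part of p(n)), and O ⊆ M_{2n}(ℂ) the subspace of matrices fromBlocks 0 B C' 0 with Bᵀ = B and C'ᵀ = −C' (the odd part of p(n)). Then: (1) for every Y ∈ E one has xY − Yx ∈ O, defining a linear map d₁ : E → O; (2) for every Y ∈ O one has xY + Yx ∈ E, defining a linear map d₀ : O → E; (3) d₀ ∘ d₁ = 0 and d₁ ∘ d₀ = 0; and (4) finrank(ker d₁ / range d₀) = (n − s)² and finrank(ker d₀ / range d₁) = (n − s)². That is, the Duflo–Serganova space DS_x(p(n)) of p(n) under the super-adjoint action of x has the same even and odd dimensions as p(n − s). -/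

import Mathlib

/-!
In block coordinates `Y = fromBlocks A 0 0 (-Aᵀ)` and `Y = fromBlocks 0 B C' 0`, the differential
`d₁` sends `A` to the lower-left block `Aᵀ C + C A`, and `d₀` sends `(B, C')` to the even element
with block `B C`. Hence `ker d₁` is the space of `C`-skew-adjoint matrices and `im d₀ ≅ Sym · C`.
Both dimensions are invariant under congruence `C ↦ Qᵀ C Q`, which brings `C` to
`fromBlocks J 0 0 0` with `J` invertible of size `s`. There
`ker d₁ = {fromBlocks a 0 c d | J a ∈ Sym}` and `im d₀ = {fromBlocks (S J) 0 c 0 | S ∈ Sym}`, so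
`dim ker d₁ - dim im d₀ = (n - s)²`, the size of the free block `d`. Since `E` and `O` both have
dimension `n²`, the Euler characteristic of the two-periodic complex `E ⇄ O` vanishes, and the odd
homology has the same dimension as the even one.
-/

open Matrix Module

/-- The even part `E ≅ gl(n)` of the periplectic Lie superalgebra `p(n)`:
matrices `fromBlocks A 0 0 (-Aᵀ)`. -/
noncomputable def pnEven (n : ℕ) : Submodule ℂ (Matrix (Fin n ⊕ Fin n) (Fin n ⊕ Fin n) ℂ) where
  carrier := {X | ∃ A : Matrix (Fin n) (Fin n) ℂ, X = Matrix.fromBlocks A 0 0 (-Aᵀ)}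
  add_mem' := by
    rintro X Y ⟨A, rfl⟩ ⟨A', rfl⟩
    exact ⟨A + A', by simp [Matrix.fromBlocks_add, Matrix.transpose_add, neg_add, add_comm]⟩
  zero_mem' := ⟨0, by simp⟩
  smul_mem' := by
    rintro c X ⟨A, rfl⟩
    exact ⟨c • A, by simp [Matrix.fromBlocks_smul, Matrix.transpose_smul]⟩

/-- The odd part `O` of the periplectic Lie superalgebra `p(n)`:
matrices `fromBlocks 0 B C' 0` with `Bᵀ = B` and `C'ᵀ = -C'`. -/
noncomputable def pnOdd (n : ℕ) : Submodule ℂ (Matrix (Fin n ⊕ Fin n) (Fin n ⊕ Fin n) ℂ) where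
  carrier := {X | ∃ B C' : Matrix (Fin n) (Fin n) ℂ,
    Bᵀ = B ∧ C'ᵀ = -C' ∧ X = Matrix.fromBlocks 0 B C' 0}
  add_mem' := by
    rintro X Y ⟨B, C', hB, hC, rfl⟩ ⟨B', C'', hB', hC', rfl⟩
    exact ⟨B + B', C' + C'',
      by simp [Matrix.transpose_add, hB, hB'],
      by simp [Matrix.transpose_add, hC, hC']; rw [add_comm],
      by simp [Matrix.fromBlocks_add]⟩
  zero_mem' := ⟨0, 0, by simp, by simp, by simp⟩
  smul_mem' := by
    rintro c X ⟨B, C', hB, hC, rfl⟩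
    exact ⟨c • B, c • C',
      by simp [Matrix.transpose_smul, hB],
      by simp [Matrix.transpose_smul, hC],
      by simp [Matrix.fromBlocks_smul]⟩

/-- The odd element `x = fromBlocks 0 0 C 0` of `p(n)` (for `C` antisymmetric). -/
noncomputable def periplecticX (n : ℕ) (C : Matrix (Fin n) (Fin n) ℂ) :
    Matrix (Fin n ⊕ Fin n) (Fin n ⊕ Fin n) ℂ :=
  Matrix.fromBlocks 0 0 C 0

/-- The linear map `Y ↦ xY - Yx` on `gl(n|n)` (the super-adjoint action of the
odd element `x` on even elements). -/
noncomputable def adMinus (n : ℕ) (C : Matrix (Fin n) (Fin n) ℂ) :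
    Matrix (Fin n ⊕ Fin n) (Fin n ⊕ Fin n) ℂ →ₗ[ℂ] Matrix (Fin n ⊕ Fin n) (Fin n ⊕ Fin n) ℂ :=
  LinearMap.mulLeft ℂ (periplecticX n C) - LinearMap.mulRight ℂ (periplecticX n C)

/-- The linear map `Y ↦ xY + Yx` on `gl(n|n)` (the super-adjoint action of the
odd element `x` on odd elements). -/
noncomputable def adPlus (n : ℕ) (C : Matrix (Fin n) (Fin n) ℂ) :
    Matrix (Fin n ⊕ Fin n) (Fin n ⊕ Fin n) ℂ →ₗ[ℂ] Matrix (Fin n ⊕ Fin n) (Fin n ⊕ Fin n) ℂ :=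
  LinearMap.mulLeft ℂ (periplecticX n C) + LinearMap.mulRight ℂ (periplecticX n C)

section FinrankLemmas

variable {K V W : Type*} [Field K] [AddCommGroup V] [Module K V] [AddCommGroup W] [Module K W]

theorem Submodule.finrank_map_of_injective {f : V →ₗ[K] W} (hf : Function.Injective f)
    (p : Submodule K V) : finrank K (p.map f) = finrank K p :=
  (p.equivMapOfInjective f hf).finrank_eq.symm

theorem Submodule.finrank_eq_of_map_le_of_map_le [FiniteDimensional K V] [FiniteDimensional K W]
    {p : Submodule K V} {q : Submodule K W} {f : V →ₗ[K] W} {g : W →ₗ[K] V}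
    (hf : Function.Injective f) (hg : Function.Injective g)
    (hpq : p.map f ≤ q) (hqp : q.map g ≤ p) : finrank K p = finrank K q :=
  le_antisymm (p.finrank_map_of_injective hf ▸ Submodule.finrank_mono hpq)
    (q.finrank_map_of_injective hg ▸ Submodule.finrank_mono hqp)

theorem Submodule.finrank_map_add_finrank_inf_ker [FiniteDimensional K V] (f : V →ₗ[K] W)
    (p : Submodule K V) :
    finrank K (p.map f) + finrank K ↥(p ⊓ LinearMap.ker f) = finrank K p := by
  have h := LinearMap.finrank_range_add_finrank_ker (f.domRestrict p)
  rwa [LinearMap.range_domRestrict, LinearMap.ker_domRestrict,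
    ← Submodule.finrank_map_subtype_eq, Submodule.map_comap_subtype] at h

theorem Submodule.finrank_quotient_comap_subtype_add_finrank [FiniteDimensional K V]
    {S T : Submodule K V} (hTS : T ≤ S) :
    finrank K (S ⧸ T.comap S.subtype) + finrank K T = finrank K S := by
  rw [← (Submodule.comapSubtypeEquivOfLe hTS).finrank_eq]
  exact Submodule.finrank_quotient_add_finrank _

/-- Euler characteristic of a two-periodic complex `E ⇄ O`. -/
theorem finrank_homology_add_finrank_eq [FiniteDimensional K V] {E O : Submodule K V}
    {d₁ d₀ : V →ₗ[K] V} (h₁ : E.map d₁ ≤ O ⊓ LinearMap.ker d₀)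
    (h₀ : O.map d₀ ≤ E ⊓ LinearMap.ker d₁) :
    finrank K (↥(E ⊓ LinearMap.ker d₁) ⧸ (O.map d₀).comap (E ⊓ LinearMap.ker d₁).subtype) +
        finrank K O =
      finrank K (↥(O ⊓ LinearMap.ker d₀) ⧸ (E.map d₁).comap (O ⊓ LinearMap.ker d₀).subtype) +
        finrank K E := by
  have := Submodule.finrank_quotient_comap_subtype_add_finrank h₁
  have := Submodule.finrank_quotient_comap_subtype_add_finrank h₀
  have := E.finrank_map_add_finrank_inf_ker d₁
  have := O.finrank_map_add_finrank_inf_ker d₀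
  omega

end FinrankLemmas

section SymmetricMatrices

variable (ι K : Type*) [Field K]

def symmetricMatrices : Submodule K (Matrix ι ι K) where
  carrier := {A | Aᵀ = A}
  add_mem' {A B} hA hB := by simp_all [transpose_add]
  zero_mem' := transpose_zero
  smul_mem' c A hA := by simp_all [transpose_smul]

def skewSymmetricMatrices : Submodule K (Matrix ι ι K) where
  carrier := {A | Aᵀ = -A}
  add_mem' {A B} hA hB := by simp_all [transpose_add, add_comm]
  zero_mem' := by simp
  smul_mem' c A hA := by simp_all [transpose_smul]

variable {ι K}

@[simp] theorem mem_symmetricMatrices {A : Matrix ι ι K} :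
    A ∈ symmetricMatrices ι K ↔ Aᵀ = A :=
  Iff.rfl

@[simp] theorem mem_skewSymmetricMatrices {A : Matrix ι ι K} :
    A ∈ skewSymmetricMatrices ι K ↔ Aᵀ = -A :=
  Iff.rfl

theorem finrank_symmetricMatrices_add_finrank_skewSymmetricMatrices [Fintype ι]
    [NeZero (2 : K)] :
    finrank K (symmetricMatrices ι K) + finrank K (skewSymmetricMatrices ι K) =
      Fintype.card ι * Fintype.card ι := by
  let sym : Matrix ι ι K →ₗ[K] Matrix ι ι K :=
    LinearMap.id + (transposeLinearEquiv ι ι K K).toLinearMap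
  have sym_apply (A : Matrix ι ι K) : sym A = A + Aᵀ := rfl
  have hrange : LinearMap.range sym = symmetricMatrices ι K := by
    refine le_antisymm ?_ fun B (hB : Bᵀ = B) => ⟨(2⁻¹ : K) • B, ?_⟩
    · rintro _ ⟨A, rfl⟩
      simp [sym_apply, add_comm]
    · rw [sym_apply, transpose_smul, hB, ← add_smul, ← two_mul, mul_inv_cancel₀ two_ne_zero,
        one_smul]
  have hker : LinearMap.ker sym = skewSymmetricMatrices ι K := by
    ext A
    simp [sym_apply, eq_neg_iff_add_eq_zero, add_comm]
  have := LinearMap.finrank_range_add_finrank_ker sym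
  rwa [hrange, hker, finrank_matrix, finrank_self, mul_one] at this

end SymmetricMatrices

namespace Matrix

variable {K : Type*} [Field K]

def mulLeftRight {ι κ ι' κ' : Type*} [Fintype ι] [Fintype ι'] (L : Matrix κ ι K)
    (R : Matrix ι' κ' K) : Matrix ι ι' K →ₗ[K] Matrix κ κ' K where
  toFun M := L * M * R
  map_add' M N := by rw [Matrix.mul_add, Matrix.add_mul]
  map_smul' c M := by rw [Matrix.mul_smul, Matrix.smul_mul]; rfl

@[simp] theorem mulLeftRight_apply {ι κ ι' κ' : Type*} [Fintype ι] [Fintype ι']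
    (L : Matrix κ ι K) (R : Matrix ι' κ' K) (M : Matrix ι ι' K) :
    mulLeftRight L R M = L * M * R := rfl

variable {ι κ : Type*} [Fintype ι] [Fintype κ] [DecidableEq ι] {Q : Matrix ι κ K}
  {Q' : Matrix κ ι K}

theorem mulLeftRight_injective (hQ : Q * Q' = 1) : Function.Injective (mulLeftRight Q' Q) :=
  Function.LeftInverse.injective (g := mulLeftRight Q Q') fun M => by
    simp only [mulLeftRight_apply, Matrix.mul_assoc, hQ, Matrix.mul_one,
      ← Matrix.mul_assoc Q Q', Matrix.one_mul]

theorem transpose_mul_mul_mul_eq_self (hQ : Q * Q' = 1) (C : Matrix ι ι K) :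
    Q'ᵀ * (Qᵀ * C * Q) * Q' = C := by
  simp only [Matrix.mul_assoc, ← Matrix.mul_assoc Q'ᵀ Qᵀ, ← transpose_mul, hQ, transpose_one,
    Matrix.one_mul, Matrix.mul_one]

theorem map_mulLeftRight_skewAdjointMatricesSubmodule_le [DecidableEq κ] (hQ : Q * Q' = 1)
    (C : Matrix ι ι K) :
    (skewAdjointMatricesSubmodule C).map (mulLeftRight Q' Q) ≤
      skewAdjointMatricesSubmodule (Qᵀ * C * Q) := by
  rintro _ ⟨A, hA, rfl⟩
  have hA : Aᵀ * C = -(C * A) := by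
    simpa [Matrix.IsSkewAdjoint, Matrix.IsAdjointPair] using hA
  have hQt : Q'ᵀ * Qᵀ = 1 := by rw [← transpose_mul, hQ, transpose_one]
  simp only [mem_skewAdjointMatricesSubmodule, Matrix.IsSkewAdjoint, Matrix.IsAdjointPair,
    mulLeftRight_apply, transpose_mul, Matrix.mul_neg]
  calc Qᵀ * (Aᵀ * Q'ᵀ) * (Qᵀ * C * Q) = Qᵀ * (Aᵀ * C) * Q := by
        simp only [Matrix.mul_assoc, ← Matrix.mul_assoc Q'ᵀ, hQt, Matrix.one_mul]
    _ = -(Qᵀ * C * Q * (Q' * A * Q)) := by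
        simp only [hA, Matrix.mul_neg, Matrix.neg_mul, Matrix.mul_assoc, ← Matrix.mul_assoc Q Q',
          hQ, Matrix.one_mul]

theorem finrank_skewAdjointMatricesSubmodule_congr [DecidableEq κ] (hQ : Q * Q' = 1)
    (hQ' : Q' * Q = 1) (C : Matrix ι ι K) :
    finrank K (skewAdjointMatricesSubmodule (Qᵀ * C * Q)) =
      finrank K (skewAdjointMatricesSubmodule C) := by
  refine (Submodule.finrank_eq_of_map_le_of_map_le (mulLeftRight_injective hQ)
    (mulLeftRight_injective hQ') (map_mulLeftRight_skewAdjointMatricesSubmodule_le hQ C) ?_).symm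
  simpa only [transpose_mul_mul_mul_eq_self hQ] using
    map_mulLeftRight_skewAdjointMatricesSubmodule_le hQ' (Qᵀ * C * Q)

theorem map_mulLeftRight_map_mulRight_symmetricMatrices_le [DecidableEq κ] (hQ : Q * Q' = 1)
    (C : Matrix ι ι K) :
    ((symmetricMatrices ι K).map (LinearMap.mulRight K C)).map (mulLeftRight Q' Q) ≤
      (symmetricMatrices κ K).map (LinearMap.mulRight K (Qᵀ * C * Q)) := by
  rintro _ ⟨_, ⟨B, hB, rfl⟩, rfl⟩
  have hQt : Q'ᵀ * Qᵀ = 1 := by rw [← transpose_mul, hQ, transpose_one]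
  refine ⟨Q' * B * Q'ᵀ, ?_, ?_⟩
  · simp_all [transpose_mul, Matrix.mul_assoc]
  · simp only [LinearMap.mulRight_apply, mulLeftRight_apply, Matrix.mul_assoc,
      ← Matrix.mul_assoc Q'ᵀ, hQt, Matrix.one_mul]

theorem finrank_map_mulRight_symmetricMatrices_congr [DecidableEq κ] (hQ : Q * Q' = 1)
    (hQ' : Q' * Q = 1) (C : Matrix ι ι K) :
    finrank K ((symmetricMatrices κ K).map (LinearMap.mulRight K (Qᵀ * C * Q))) =
      finrank K ((symmetricMatrices ι K).map (LinearMap.mulRight K C)) := by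
  refine (Submodule.finrank_eq_of_map_le_of_map_le (mulLeftRight_injective hQ)
    (mulLeftRight_injective hQ') (map_mulLeftRight_map_mulRight_symmetricMatrices_le hQ C) ?_).symm
  simpa only [transpose_mul_mul_mul_eq_self hQ] using
    map_mulLeftRight_map_mulRight_symmetricMatrices_le hQ' (Qᵀ * C * Q)

end Matrix

theorem eq_fromBlocks_toBlocks₁₁_of_transpose_eq_neg {R α β : Type*} [AddGroup R]
    {D : Matrix (α ⊕ β) (α ⊕ β) R} (hD : Dᵀ = -D) (h : ∀ k j, D k (Sum.inr j) = 0) :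
    D = fromBlocks D.toBlocks₁₁ 0 0 0 := by
  ext (i | i) (j | j)
  · rfl
  · exact h _ j
  · simpa [h] using congrFun (congrFun hD (Sum.inl j)) (Sum.inr i)
  · exact h _ j

section Blocks

variable {K α β : Type*} [Field K] [Fintype α] [Fintype β] [DecidableEq α] [DecidableEq β]

theorem finrank_skewAdjointMatricesSubmodule_of_isUnit {J : Matrix α α K} (hJ : IsUnit J)
    (hJt : Jᵀ = -J) :
    finrank K (skewAdjointMatricesSubmodule J) = finrank K (symmetricMatrices α K) := by
  have mem (A : Matrix α α K) :
      A ∈ skewAdjointMatricesSubmodule J ↔ J * A ∈ symmetricMatrices α K := by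
    simp only [mem_skewAdjointMatricesSubmodule, Matrix.IsSkewAdjoint, Matrix.IsAdjointPair,
      mem_symmetricMatrices, transpose_mul, hJt, Matrix.mul_neg]
    exact neg_eq_iff_eq_neg.symm
  refine Submodule.finrank_eq_of_map_le_of_map_le (f := LinearMap.mulLeft K J)
    (g := LinearMap.mulLeft K J⁻¹) hJ.mul_right_injective
    (isUnit_nonsing_inv_iff.mpr hJ).mul_right_injective ?_ ?_
  · rintro _ ⟨A, hA, rfl⟩
    exact (mem A).1 hA
  · rintro _ ⟨S, hS, rfl⟩
    rw [mem, LinearMap.mulLeft_apply,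
      mul_nonsing_inv_cancel_left _ _ ((isUnit_iff_isUnit_det J).mp hJ)]
    exact hS

theorem finrank_skewAdjointMatricesSubmodule_fromBlocks {J : Matrix α α K} (hJ : IsUnit J) :
    finrank K (skewAdjointMatricesSubmodule (fromBlocks J 0 0 (0 : Matrix β β K))) =
      finrank K (skewAdjointMatricesSubmodule J) + Fintype.card β * Fintype.card α +
        Fintype.card β * Fintype.card β := by
  have mem (a : Matrix α α K) (b : Matrix α β K) (c : Matrix β α K) (d : Matrix β β K) :
      fromBlocks a b c d ∈ skewAdjointMatricesSubmodule (fromBlocks J 0 0 0) ↔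
        a ∈ skewAdjointMatricesSubmodule J ∧ b = 0 := by
    simp only [mem_skewAdjointMatricesSubmodule, Matrix.IsSkewAdjoint, Matrix.IsAdjointPair,
      fromBlocks_transpose, fromBlocks_neg, fromBlocks_multiply, fromBlocks_inj,
      Matrix.mul_zero, Matrix.zero_mul, add_zero, Matrix.mul_neg, neg_zero]
    constructor
    · rintro ⟨ha, hb, -, -⟩
      refine ⟨ha, ?_⟩
      simpa [nonsing_inv_mul_cancel_left _ _ ((isUnit_iff_isUnit_det J).mp hJ)] using
        congrArg (J⁻¹ * ·) hb
    · rintro ⟨ha, rfl⟩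
      simp [ha]
  let P : skewAdjointMatricesSubmodule J × Matrix β α K × Matrix β β K →ₗ[K]
      Matrix (α ⊕ β) (α ⊕ β) K :=
    { toFun x := fromBlocks x.1 0 x.2.1 x.2.2
      map_add' x y := by simp [fromBlocks_add]
      map_smul' c x := by simp [fromBlocks_smul] }
  have hP : Function.Injective P := fun x y h => by
    obtain ⟨h₁, -, h₃, h₄⟩ := fromBlocks_inj.mp h
    exact Prod.ext (Subtype.ext h₁) (Prod.ext h₃ h₄)
  have hrange : LinearMap.range P = skewAdjointMatricesSubmodule (fromBlocks J 0 0 0) := by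
    ext A
    obtain ⟨a, b, c, d, rfl⟩ : ∃ a b c d, A = fromBlocks a b c d :=
      ⟨_, _, _, _, (fromBlocks_toBlocks A).symm⟩
    rw [mem, LinearMap.mem_range]
    constructor
    · rintro ⟨⟨a', c', d'⟩, h⟩
      obtain ⟨rfl, rfl, -, -⟩ := fromBlocks_inj.mp h
      exact ⟨a'.2, rfl⟩
    · rintro ⟨ha, rfl⟩
      exact ⟨(⟨a, ha⟩, c, d), rfl⟩
  rw [← hrange, LinearMap.finrank_range_of_inj hP, finrank_prod, finrank_prod, finrank_matrix,
    finrank_matrix, finrank_self, mul_one, mul_one, add_assoc]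

theorem finrank_map_mulRight_fromBlocks_symmetricMatrices {J : Matrix α α K} (hJ : IsUnit J) :
    finrank K ((symmetricMatrices (α ⊕ β) K).map
        (LinearMap.mulRight K (fromBlocks J 0 0 (0 : Matrix β β K)))) =
      finrank K (symmetricMatrices α K) + Fintype.card β * Fintype.card α := by
  have hJ' := (isUnit_iff_isUnit_det J).mp hJ
  let P : symmetricMatrices α K × Matrix β α K →ₗ[K] Matrix (α ⊕ β) (α ⊕ β) K :=
    { toFun x := fromBlocks (x.1 * J) 0 (x.2 * J) 0
      map_add' x y := by simp [fromBlocks_add, Matrix.add_mul]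
      map_smul' c x := by simp [fromBlocks_smul] }
  have hP : Function.Injective P := fun x y h => by
    obtain ⟨h₁, -, h₃, -⟩ := fromBlocks_inj.mp h
    refine Prod.ext (Subtype.ext ?_) ?_
    · simpa [mul_nonsing_inv_cancel_right _ _ hJ'] using congrArg (· * J⁻¹) h₁
    · simpa [mul_nonsing_inv_cancel_right _ _ hJ'] using congrArg (· * J⁻¹) h₃
  have hrange : LinearMap.range P = (symmetricMatrices (α ⊕ β) K).map
      (LinearMap.mulRight K (fromBlocks J 0 0 0)) := by
    apply le_antisymm
    · rintro _ ⟨⟨a, c⟩, rfl⟩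
      refine ⟨fromBlocks a cᵀ c 0, ?_, by simp [P, fromBlocks_multiply]⟩
      rw [SetLike.mem_coe, mem_symmetricMatrices, fromBlocks_transpose, transpose_transpose,
        transpose_zero, mem_symmetricMatrices.mp a.2]
    · rintro _ ⟨B, hB, rfl⟩
      obtain ⟨a, b, c, d, rfl⟩ : ∃ a b c d, B = fromBlocks a b c d :=
        ⟨_, _, _, _, (fromBlocks_toBlocks B).symm⟩
      have ha : aᵀ = a := (fromBlocks_inj.mp ((fromBlocks_transpose a b c d).symm.trans hB)).1
      exact ⟨(⟨a, ha⟩, c), by simp [P, fromBlocks_multiply]⟩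
  rw [← hrange, LinearMap.finrank_range_of_inj hP, finrank_prod, finrank_matrix, finrank_self,
    mul_one]

end Blocks

section NormalForm

variable {K ι : Type*} [Field K] [Fintype ι] [DecidableEq ι]

theorem isUnit_of_transpose_mul_mul_eq_fromBlocks {α β : Type*} [Fintype α] [Fintype β]
    [DecidableEq α] {Q : Matrix ι (α ⊕ β) K} {Q' : Matrix (α ⊕ β) ι K} (hQ : Q * Q' = 1)
    {C : Matrix ι ι K} {J : Matrix α α K} (hD : Qᵀ * C * Q = fromBlocks J 0 0 0)
    (hinj : ∀ v, C *ᵥ (Q *ᵥ Sum.elim v 0) = 0 → v = 0) : IsUnit J := by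
  rw [← mulVec_injective_iff_isUnit]
  refine (injective_iff_map_eq_zero J.mulVecLin).2 fun v hv => hinj v ?_
  have hQt : Q'ᵀ * Qᵀ = 1 := by rw [← transpose_mul, hQ, transpose_one]
  calc C *ᵥ (Q *ᵥ Sum.elim v 0) = Q'ᵀ *ᵥ ((Qᵀ * C * Q) *ᵥ Sum.elim v 0) := by
        simp only [mulVec_mulVec, ← Matrix.mul_assoc, hQt, Matrix.one_mul]
    _ = 0 := by
        rw [hD, fromBlocks_mulVec]
        simp [show J *ᵥ v = 0 from hv]

theorem exists_transpose_mul_mul_eq_fromBlocks (C : Matrix ι ι K) (hC : Cᵀ = -C) :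
    ∃ (m : ℕ) (Q : Matrix ι (Fin m ⊕ Fin (finrank K (LinearMap.ker C.mulVecLin))) K)
      (Q' : Matrix (Fin m ⊕ Fin (finrank K (LinearMap.ker C.mulVecLin))) ι K)
      (J : Matrix (Fin m) (Fin m) K),
      Q * Q' = 1 ∧ Q' * Q = 1 ∧ IsUnit J ∧ Jᵀ = -J ∧ Qᵀ * C * Q = fromBlocks J 0 0 0 := by
  set N := LinearMap.ker C.mulVecLin
  obtain ⟨U, hUN⟩ := N.exists_isCompl
  let b := ((finBasis K U).prod (finBasis K N)).map (U.prodEquivOfIsCompl N hUN.symm)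
  let Q := (Pi.basisFun K ι).toMatrix b
  let Q' := b.toMatrix (Pi.basisFun K ι)
  have hQQ' : Q * Q' = 1 := Basis.toMatrix_mul_toMatrix_flip _ _
  have hQ'Q : Q' * Q = 1 := Basis.toMatrix_mul_toMatrix_flip _ _
  have hQ_mulVec (y) : Q *ᵥ y = ∑ k, y k • b k := by
    ext i
    simp [Q, mulVec, dotProduct, Basis.toMatrix_apply, mul_comm]
  have hCb (j) : C *ᵥ b (Sum.inr j) = 0 := by
    have := (finBasis K N j).2
    simp only [N, LinearMap.mem_ker, mulVecLin_apply] at this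
    simpa [b] using this
  set D := Qᵀ * C * Q
  have hDt : Dᵀ = -D := by simp [D, transpose_mul, hC, Matrix.mul_assoc]
  have hD : D = fromBlocks D.toBlocks₁₁ 0 0 0 := by
    refine eq_fromBlocks_toBlocks₁₁_of_transpose_eq_neg hDt fun k j => ?_
    have hCQ (p) : (C * Q) p (Sum.inr j) = 0 := by
      simpa [mul_apply, mulVec, dotProduct, Q, Basis.toMatrix_apply] using congrFun (hCb j) p
    simp [D, Matrix.mul_assoc, mul_apply (M := Qᵀ), hCQ]
  have hJ : IsUnit D.toBlocks₁₁ := isUnit_of_transpose_mul_mul_eq_fromBlocks hQQ' hD fun v hv => by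
    have hQvU : Q *ᵥ Sum.elim v 0 ∈ U := by
      rw [hQ_mulVec, Fintype.sum_sum_type]
      simpa [b] using Submodule.sum_mem U fun i _ => U.smul_mem (v i) (finBasis K U i).2
    have hQv : Q *ᵥ Sum.elim v 0 = 0 := Submodule.disjoint_def.mp hUN.disjoint _ hv hQvU
    have hv0 : Sum.elim v (0 : Fin (finrank K N) → K) = 0 := by
      simpa [mulVec_mulVec, hQ'Q] using congrArg (Q' *ᵥ ·) hQv
    funext i
    exact congrFun hv0 (Sum.inl i)
  refine ⟨_, Q, Q', D.toBlocks₁₁, hQQ', hQ'Q, hJ, ?_, hD⟩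
  ext i j
  exact congrFun (congrFun hDt (Sum.inl i)) (Sum.inl j)

theorem finrank_skewAdjointMatricesSubmodule_eq_finrank_map_mulRight_add_sq (C : Matrix ι ι K)
    (hC : Cᵀ = -C) :
    finrank K (skewAdjointMatricesSubmodule C) =
      finrank K ((symmetricMatrices ι K).map (LinearMap.mulRight K C)) +
        finrank K (LinearMap.ker C.mulVecLin) ^ 2 := by
  obtain ⟨m, Q, Q', J, hQQ', hQ'Q, hJ, hJt, hD⟩ := exists_transpose_mul_mul_eq_fromBlocks C hC
  rw [← finrank_skewAdjointMatricesSubmodule_congr hQQ' hQ'Q,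
    ← finrank_map_mulRight_symmetricMatrices_congr hQQ' hQ'Q, hD,
    finrank_skewAdjointMatricesSubmodule_fromBlocks hJ,
    finrank_map_mulRight_fromBlocks_symmetricMatrices hJ,
    finrank_skewAdjointMatricesSubmodule_of_isUnit hJ hJt, Fintype.card_fin]
  ring

end NormalForm

section Periplectic

variable (n : ℕ)

noncomputable def evenEmbedding :
    Matrix (Fin n) (Fin n) ℂ →ₗ[ℂ] Matrix (Fin n ⊕ Fin n) (Fin n ⊕ Fin n) ℂ where
  toFun A := fromBlocks A 0 0 (-Aᵀ)
  map_add' A B := by simp [fromBlocks_add, add_comm]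
  map_smul' c A := by simp [fromBlocks_smul]

noncomputable def oddEmbedding :
    symmetricMatrices (Fin n) ℂ × skewSymmetricMatrices (Fin n) ℂ →ₗ[ℂ]
      Matrix (Fin n ⊕ Fin n) (Fin n ⊕ Fin n) ℂ where
  toFun x := fromBlocks 0 x.1 x.2 0
  map_add' x y := by simp [fromBlocks_add]
  map_smul' c x := by simp [fromBlocks_smul]

@[simp] theorem evenEmbedding_apply (A : Matrix (Fin n) (Fin n) ℂ) :
    evenEmbedding n A = fromBlocks A 0 0 (-Aᵀ) := rfl

@[simp] theorem oddEmbedding_apply (x) : oddEmbedding n x = fromBlocks 0 x.1 x.2 0 := rfl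

theorem evenEmbedding_injective : Function.Injective (evenEmbedding n) :=
  fun _ _ h => (fromBlocks_inj.mp h).1

theorem oddEmbedding_injective : Function.Injective (oddEmbedding n) := fun _ _ h =>
  Prod.ext (Subtype.ext (fromBlocks_inj.mp h).2.1) (Subtype.ext (fromBlocks_inj.mp h).2.2.1)

theorem range_evenEmbedding : LinearMap.range (evenEmbedding n) = pnEven n := by
  ext X
  exact exists_congr fun A => eq_comm

theorem range_oddEmbedding : LinearMap.range (oddEmbedding n) = pnOdd n := by
  ext X
  constructor
  · rintro ⟨⟨B, C'⟩, rfl⟩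
    exact ⟨B, C', B.2, C'.2, rfl⟩
  · rintro ⟨B, C', hB, hC', rfl⟩
    exact ⟨(⟨B, hB⟩, ⟨C', hC'⟩), rfl⟩

theorem finrank_pnEven : finrank ℂ (pnEven n) = n * n := by
  rw [← range_evenEmbedding, LinearMap.finrank_range_of_inj (evenEmbedding_injective n),
    finrank_matrix, finrank_self, Fintype.card_fin, mul_one]

theorem finrank_pnOdd : finrank ℂ (pnOdd n) = n * n := by
  rw [← range_oddEmbedding, LinearMap.finrank_range_of_inj (oddEmbedding_injective n),
    finrank_prod, finrank_symmetricMatrices_add_finrank_skewSymmetricMatrices, Fintype.card_fin]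

variable {n} (C : Matrix (Fin n) (Fin n) ℂ)

theorem adMinus_evenEmbedding (A : Matrix (Fin n) (Fin n) ℂ) :
    adMinus n C (evenEmbedding n A) = fromBlocks 0 0 (Aᵀ * C + C * A) 0 := by
  simp [adMinus, periplecticX, fromBlocks_multiply, sub_eq_add_neg, fromBlocks_add, fromBlocks_neg,
    add_comm]

theorem adPlus_fromBlocks (B C' : Matrix (Fin n) (Fin n) ℂ) :
    adPlus n C (fromBlocks 0 B C' 0) = fromBlocks (B * C) 0 0 (C * B) := by
  simp [adPlus, periplecticX, fromBlocks_multiply, fromBlocks_add]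

variable {C}

theorem adPlus_oddEmbedding (hC : Cᵀ = -C) (x) :
    adPlus n C (oddEmbedding n x) = evenEmbedding n (x.1 * C) := by
  rw [oddEmbedding_apply, adPlus_fromBlocks, evenEmbedding_apply, transpose_mul, hC,
    mem_symmetricMatrices.mp x.1.2, Matrix.neg_mul, neg_neg]

theorem ker_adMinus_comp_evenEmbedding :
    LinearMap.ker (adMinus n C ∘ₗ evenEmbedding n) = skewAdjointMatricesSubmodule C := by
  ext A
  simp only [LinearMap.mem_ker, LinearMap.comp_apply, adMinus_evenEmbedding,
    mem_skewAdjointMatricesSubmodule, Matrix.IsSkewAdjoint, Matrix.IsAdjointPair, Matrix.mul_neg]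
  rw [← fromBlocks_zero, fromBlocks_inj]
  simp [add_eq_zero_iff_eq_neg]

theorem finrank_pnEven_inf_ker_adMinus :
    finrank ℂ ↥(pnEven n ⊓ LinearMap.ker (adMinus n C)) =
      finrank ℂ (skewAdjointMatricesSubmodule C) := by
  rw [← range_evenEmbedding, ← Submodule.map_comap_eq, ← LinearMap.ker_comp,
    ker_adMinus_comp_evenEmbedding, Submodule.finrank_map_of_injective (evenEmbedding_injective n)]

theorem finrank_map_adPlus_pnOdd (hC : Cᵀ = -C) :
    finrank ℂ ((pnOdd n).map (adPlus n C)) =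
      finrank ℂ ((symmetricMatrices (Fin n) ℂ).map (LinearMap.mulRight ℂ C)) := by
  have : adPlus n C ∘ₗ oddEmbedding n = evenEmbedding n ∘ₗ LinearMap.mulRight ℂ C ∘ₗ
      (symmetricMatrices (Fin n) ℂ).subtype ∘ₗ LinearMap.fst ℂ _ _ :=
    LinearMap.ext (adPlus_oddEmbedding hC)
  rw [← range_oddEmbedding, ← LinearMap.range_comp, this, LinearMap.range_comp,
    LinearMap.range_comp, LinearMap.range_comp, Submodule.range_fst, Submodule.map_top,
    Submodule.range_subtype, Submodule.finrank_map_of_injective (evenEmbedding_injective n)]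

theorem adMinus_mem_pnOdd (hC : Cᵀ = -C) {Y} (hY : Y ∈ pnEven n) : adMinus n C Y ∈ pnOdd n := by
  obtain ⟨A, rfl⟩ := (range_evenEmbedding n).ge hY
  refine ⟨0, Aᵀ * C + C * A, by simp, ?_, adMinus_evenEmbedding C A⟩
  simp [transpose_mul, hC, add_comm]

theorem adPlus_mem_pnEven (hC : Cᵀ = -C) {Y} (hY : Y ∈ pnOdd n) : adPlus n C Y ∈ pnEven n := by
  obtain ⟨x, rfl⟩ := (range_oddEmbedding n).ge hY
  rw [adPlus_oddEmbedding hC, ← range_evenEmbedding]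
  exact LinearMap.mem_range_self _ _

theorem adPlus_adMinus {Y} (hY : Y ∈ pnEven n) : adPlus n C (adMinus n C Y) = 0 := by
  obtain ⟨A, rfl⟩ := (range_evenEmbedding n).ge hY
  rw [adMinus_evenEmbedding, adPlus_fromBlocks]
  simp

theorem adMinus_adPlus (hC : Cᵀ = -C) {Y} (hY : Y ∈ pnOdd n) : adMinus n C (adPlus n C Y) = 0 := by
  obtain ⟨x, rfl⟩ := (range_oddEmbedding n).ge hY
  rw [adPlus_oddEmbedding hC, adMinus_evenEmbedding, transpose_mul, hC,
    mem_symmetricMatrices.mp x.1.2]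
  simp [Matrix.mul_assoc]

end Periplectic

theorem DS_adjoint_representation_general (n s : ℕ)
    (C : Matrix (Fin n) (Fin n) ℂ) (hC : Cᵀ = -C) (hrk : C.rank = s) :
    (∀ Y ∈ pnEven n, adMinus n C Y ∈ pnOdd n) ∧
    (∀ Y ∈ pnOdd n, adPlus n C Y ∈ pnEven n) ∧
    (∀ Y ∈ pnEven n, adPlus n C (adMinus n C Y) = 0) ∧
    (∀ Y ∈ pnOdd n, adMinus n C (adPlus n C Y) = 0) ∧
    finrank ℂ
      (((pnEven n ⊓ LinearMap.ker (adMinus n C) :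
          Submodule ℂ (Matrix (Fin n ⊕ Fin n) (Fin n ⊕ Fin n) ℂ))) ⧸
        (Submodule.map (adPlus n C) (pnOdd n)).comap
          (pnEven n ⊓ LinearMap.ker (adMinus n C)).subtype)
      = (n - s) ^ 2 ∧
    finrank ℂ
      (((pnOdd n ⊓ LinearMap.ker (adPlus n C) :
          Submodule ℂ (Matrix (Fin n ⊕ Fin n) (Fin n ⊕ Fin n) ℂ))) ⧸
        (Submodule.map (adMinus n C) (pnEven n)).comap
          (pnOdd n ⊓ LinearMap.ker (adPlus n C)).subtype)
      = (n - s) ^ 2 := by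
  have hker : finrank ℂ (LinearMap.ker C.mulVecLin) = n - s := by
    have := LinearMap.finrank_range_add_finrank_ker C.mulVecLin
    rw [finrank_fin_fun, ← Matrix.rank, hrk] at this
    omega
  have h₁ : (pnEven n).map (adMinus n C) ≤ pnOdd n ⊓ LinearMap.ker (adPlus n C) :=
    Submodule.map_le_iff_le_comap.mpr fun Y hY => ⟨adMinus_mem_pnOdd hC hY, adPlus_adMinus hY⟩
  have h₀ : (pnOdd n).map (adPlus n C) ≤ pnEven n ⊓ LinearMap.ker (adMinus n C) :=
    Submodule.map_le_iff_le_comap.mpr fun Y hY => ⟨adPlus_mem_pnEven hC hY, adMinus_adPlus hC hY⟩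
  have heven := Submodule.finrank_quotient_comap_subtype_add_finrank h₀
  rw [finrank_pnEven_inf_ker_adMinus, finrank_map_adPlus_pnOdd hC,
    finrank_skewAdjointMatricesSubmodule_eq_finrank_map_mulRight_add_sq C hC, hker] at heven
  have hodd := finrank_homology_add_finrank_eq h₁ h₀
  rw [finrank_pnEven, finrank_pnOdd] at hodd
  exact ⟨fun _ => adMinus_mem_pnOdd hC, fun _ => adPlus_mem_pnEven hC, fun _ => adPlus_adMinus,
    fun _ => adMinus_adPlus hC, by omega, by omega⟩

/-- For `C` antisymmetric of rank `s ≤ n` and `x = fromBlocks 0 0 C 0`: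
(1) `xY - Yx ∈ O` for `Y ∈ E`, so the super-adjoint action defines `d₁ : E → O`;
(2) `xY + Yx ∈ E` for `Y ∈ O`, defining `d₀ : O → E`;
(3) `d₀ ∘ d₁ = 0` and `d₁ ∘ d₀ = 0`;
(4) `dim (ker d₁ / im d₀) = dim (ker d₀ / im d₁) = (n-s)²`, i.e. `DS_x(p(n))` has the
same even and odd dimensions as `p(n-s)`.  Here `ker d₁ = E ⊓ ker (Y ↦ xY - Yx)`,
`im d₀ = (Y ↦ xY + Yx) '' O`, and symmetrically for the other pair. -/
theorem DS_adjoint_representation (n s : ℕ) (hn : 1 ≤ n) (hsn : s ≤ n)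
    (C : Matrix (Fin n) (Fin n) ℂ) (hC : Cᵀ = -C) (hrk : C.rank = s) :
    (∀ Y ∈ pnEven n, adMinus n C Y ∈ pnOdd n) ∧
    (∀ Y ∈ pnOdd n, adPlus n C Y ∈ pnEven n) ∧
    (∀ Y ∈ pnEven n, adPlus n C (adMinus n C Y) = 0) ∧
    (∀ Y ∈ pnOdd n, adMinus n C (adPlus n C Y) = 0) ∧
    finrank ℂ
      (((pnEven n ⊓ LinearMap.ker (adMinus n C) :
          Submodule ℂ (Matrix (Fin n ⊕ Fin n) (Fin n ⊕ Fin n) ℂ))) ⧸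
        (Submodule.map (adPlus n C) (pnOdd n)).comap
          (pnEven n ⊓ LinearMap.ker (adMinus n C)).subtype)
      = (n - s) ^ 2 ∧
    finrank ℂ
      (((pnOdd n ⊓ LinearMap.ker (adPlus n C) :
          Submodule ℂ (Matrix (Fin n ⊕ Fin n) (Fin n ⊕ Fin n) ℂ))) ⧸
        (Submodule.map (adMinus n C) (pnEven n)).comap
          (pnOdd n ⊓ LinearMap.ker (adPlus n C)).subtype)
      = (n - s) ^ 2 :=
  DS_adjoint_representation_general n s C hC hrk
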